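/- With θ, L, α, β as above, one has α(1/2) - α(2/5) > β(0,1/2) - β(0,2/5), where β(0,t) = (1/L(t))·arccos(1/cosh(L(t))). -/
import Mathlib


noncomputable def arcosh (x : ℝ) : ℝ := Real.log (x + Real.sqrt (x^2 - 1))

noncomputable def θ (t : ℝ) : ℝ := Real.arccos (2*t^3*(3 - t^2) / (1+t^2)^2)

noncomputable def L (t : ℝ) : ℝ :=
  (1/2) * arcosh ((1 + 8*t^2 + 21*t^4 - 2*t^6) / (2*t^2*(1+t^2)^2))

noncomputable def α (t : ℝ) : ℝ := (Real.pi + θ t) / (2 * L t)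

noncomputable def β (x t : ℝ) : ℝ :=
  (1 / L t) * Real.arccos (Real.cosh (x * L t) / Real.cosh (L t))

/-! ### Auxiliary lemmas -/

lemma cosb {y : ℝ} (h0 : 0 ≤ y) (h1 : y ≤ 1) :
    1 - y^2/2 - y^4*(5/96) ≤ Real.cos y ∧ Real.cos y ≤ 1 - y^2/2 + y^4*(5/96) := by
  have h := Real.cos_bound (x := y) (by rwa [abs_of_nonneg h0])
  rw [abs_of_nonneg h0] at h
  have h' := abs_le.1 h
  constructor <;> linarith [h'.1, h'.2]

lemma cos_dbl {y lo hi : ℝ} (h0 : 0 ≤ lo) (h1 : lo ≤ Real.cos y) (h2 : Real.cos y ≤ hi) :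
    2*lo^2 - 1 ≤ Real.cos (2*y) ∧ Real.cos (2*y) ≤ 2*hi^2 - 1 := by
  rw [Real.cos_two_mul]
  constructor <;> nlinarith

lemma cos_oct {y : ℝ} (h0 : 0 ≤ y) (h1 : y ≤ 1)
    (h2 : (0:ℝ) ≤ 2*(1 - y^2/2 - y^4*(5/96))^2 - 1)
    (h3 : (0:ℝ) ≤ 2*(2*(1 - y^2/2 - y^4*(5/96))^2 - 1)^2 - 1) :
    2*(2*(2*(1 - y^2/2 - y^4*(5/96))^2 - 1)^2 - 1)^2 - 1 ≤ Real.cos (2*(2*(2*y))) ∧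
    Real.cos (2*(2*(2*y))) ≤ 2*(2*(2*(1 - y^2/2 + y^4*(5/96))^2 - 1)^2 - 1)^2 - 1 := by
  obtain ⟨a, b⟩ := cosb h0 h1
  have hy2 : y^2 ≤ 1 := by nlinarith
  have hy4 : y^4 ≤ 1 := by nlinarith
  obtain ⟨c, d⟩ := cos_dbl (by nlinarith) a b
  obtain ⟨e, f⟩ := cos_dbl h2 c d
  exact cos_dbl h3 e f

lemma lt_arccos {q a : ℝ} (hq1 : -1 ≤ q) (hq2 : q ≤ 1) (haπ : a ≤ Real.pi)
    (h : q < Real.cos a) : a < Real.arccos q := by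
  rcases lt_or_ge a (Real.arccos q) with h' | h'
  · exact h'
  · exfalso
    have hc : Real.cos a ≤ Real.cos (Real.arccos q) :=
      Real.cos_le_cos_of_nonneg_of_le_pi (Real.arccos_nonneg q) haπ h'
    rw [Real.cos_arccos hq1 hq2] at hc; linarith

lemma arccos_lt {q a : ℝ} (hq1 : -1 ≤ q) (hq2 : q ≤ 1) (ha : 0 ≤ a)
    (h : Real.cos a < q) : Real.arccos q < a := by
  rcases lt_or_ge (Real.arccos q) a with h' | h'
  · exact h'
  · exfalso
    have hc : Real.cos (Real.arccos q) ≤ Real.cos a :=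
      Real.cos_le_cos_of_nonneg_of_le_pi ha (Real.arccos_le_pi q) h'
    rw [Real.cos_arccos hq1 hq2] at hc; linarith

lemma cos_1112 : (11:ℝ)/25 < Real.cos 1.112 := by
  have h := (cos_oct (y := 0.139) (by norm_num) (by norm_num) (by norm_num) (by norm_num)).1
  have e : (1.112:ℝ) = 2*(2*(2*0.139)) := by norm_num
  rw [e]
  refine lt_of_lt_of_le (by norm_num) h

lemma cos_9855 : Real.cos 0.9855 < (5:ℝ)/9 := by
  have h := (cos_oct (y := 0.9855/8) (by norm_num) (by norm_num) (by norm_num) (by norm_num)).2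
  have e : (0.9855:ℝ) = 2*(2*(2*(0.9855/8))) := by norm_num
  rw [e]
  refine lt_of_le_of_lt h (by norm_num)

lemma cos_1303 : Real.cos 1.303 < (1136:ℝ)/4205 := by
  have h := (cos_oct (y := 1.303/8) (by norm_num) (by norm_num) (by norm_num) (by norm_num)).2
  have e : (1.303:ℝ) = 2*(2*(2*(1.303/8))) := by norm_num
  rw [e]
  refine lt_of_le_of_lt h (by norm_num)

lemma cos_10255 : (116:ℝ)/225 < Real.cos 1.0255 := by
  have h := (cos_oct (y := 1.0255/8) (by norm_num) (by norm_num) (by norm_num) (by norm_num)).1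
  have e : (1.0255:ℝ) = 2*(2*(2*(1.0255/8))) := by norm_num
  rw [e]
  refine lt_of_lt_of_le (by norm_num) h

lemma final_ineq {p t1 t2 a1 a2 l1 l2 : ℝ}
    (hp1 : 3.141592 < p) (hp2 : p < 3.141593)
    (ht1 : 1.112 < t1) (ht2 : t2 < 1.303) (ht2n : 0 ≤ t2)
    (ha1 : a1 < 0.9855) (ha2 : 1.0255 < a2) (ha2u : a2 ≤ p/2)
    (hl1 : 0 < l1) (hl1u : l1 ≤ 1.1945) (hl2 : 1.2795 ≤ l2) :
    (p + t1)/(2*l1) - (p + t2)/(2*l2) > 1/l1 * a1 - 1/l2 * a2 := by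
  have hl2p : 0 < l2 := by linarith
  rw [gt_iff_lt, ← sub_pos]
  have key : ((p+t1)/(2*l1) - (p+t2)/(2*l2)) - (1/l1*a1 - 1/l2*a2)
      = ((p+t1-2*a1)*(2*l2) - (p+t2-2*a2)*(2*l1))/(4*l1*l2) := by
    field_simp; ring
  rw [key]
  apply div_pos _ (by positivity)
  have h1 : 2.282592*(2*1.2795) ≤ (p+t1-2*a1)*(2*l2) := by nlinarith
  have h2 : (p+t2-2*a2)*(2*l1) ≤ 2.393593*(2*1.1945) := by nlinarith
  nlinarith [h1, h2]

theorem stmt_15 :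
    (β 0 (1/2) = (1 / L (1/2)) * Real.arccos (1 / Real.cosh (L (1/2)))) ∧
    (β 0 (2/5) = (1 / L (2/5)) * Real.arccos (1 / Real.cosh (L (2/5)))) ∧
    α (1/2) - α (2/5) > β 0 (1/2) - β 0 (2/5) := by
  refine ⟨by simp [β, Real.cosh_zero], by simp [β, Real.cosh_zero], ?_⟩
  -- square roots
  have hs : (Real.sqrt 14) ^ 2 = 14 := Real.sq_sqrt (by norm_num)
  have hsn : 0 ≤ Real.sqrt 14 := Real.sqrt_nonneg 14
  have hslo : (3.7416:ℝ) < Real.sqrt 14 := (Real.lt_sqrt (by norm_num)).2 (by norm_num)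
  have hshi : Real.sqrt 14 < 3.7417 := (Real.sqrt_lt' (by norm_num)).2 (by norm_num)
  have hu : (Real.sqrt 37169) ^ 2 = 37169 := Real.sq_sqrt (by norm_num)
  have hun : 0 ≤ Real.sqrt 37169 := Real.sqrt_nonneg 37169
  have hulo : (192.79:ℝ) < Real.sqrt 37169 := (Real.lt_sqrt (by norm_num)).2 (by norm_num)
  have huhi : Real.sqrt 37169 < 192.8 := (Real.sqrt_lt' (by norm_num)).2 (by norm_num)
  -- closed forms of L
  have hL1 : L (1/2) = Real.log ((9 + 2*Real.sqrt 14)/5) := by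
    unfold L arcosh
    have e1 : (1 + 8*((1:ℝ)/2)^2 + 21*((1:ℝ)/2)^4 - 2*((1:ℝ)/2)^6)
        / (2*((1:ℝ)/2)^2*(1+((1:ℝ)/2)^2)^2) = 137/25 := by norm_num
    rw [e1]
    have e3 : ((137:ℝ)/25)^2 - 1 = (36*Real.sqrt 14/25)^2 := by
      linear_combination (-(1296:ℝ)/625) * hs
    rw [e3, Real.sqrt_sq (by positivity)]
    have e4 : (137:ℝ)/25 + 36*Real.sqrt 14/25 = ((9 + 2*Real.sqrt 14)/5)^2 := by
      linear_combination (-(4:ℝ)/25) * hs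
    rw [e4, Real.log_pow]
    push_cast; ring
  have hL2 : L (2/5) = Real.log ((225 + Real.sqrt 37169)/116) := by
    unfold L arcosh
    have e1 : (1 + 8*((2:ℝ)/5)^2 + 21*((2:ℝ)/5)^4 - 2*((2:ℝ)/5)^6)
        / (2*((2:ℝ)/5)^2*(1+((2:ℝ)/5)^2)^2) = 43897/6728 := by norm_num
    rw [e1]
    have e3 : ((43897:ℝ)/6728)^2 - 1 = (225*Real.sqrt 37169/6728)^2 := by
      linear_combination (-(50625:ℝ)/45265984) * hu
    rw [e3, Real.sqrt_sq (by positivity)]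
    have e4 : (43897:ℝ)/6728 + 225*Real.sqrt 37169/6728 = ((225 + Real.sqrt 37169)/116)^2 := by
      linear_combination (-(1:ℝ)/13456) * hu
    rw [e4, Real.log_pow]
    push_cast; ring
  -- cosh values
  have hcosh1 : Real.cosh (L (1/2)) = 9/5 := by
    rw [hL1, Real.cosh_log (by positivity)]
    have hinv : (((9:ℝ) + 2*Real.sqrt 14)/5)⁻¹ = (9 - 2*Real.sqrt 14)/5 := by
      refine inv_eq_of_mul_eq_one_right ?_
      linear_combination (-(4:ℝ)/25) * hs
    rw [hinv]; ring
  have hcosh2 : Real.cosh (L (2/5)) = 225/116 := by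
    rw [hL2, Real.cosh_log (by positivity)]
    have hinv : (((225:ℝ) + Real.sqrt 37169)/116)⁻¹ = (225 - Real.sqrt 37169)/116 := by
      refine inv_eq_of_mul_eq_one_right ?_
      linear_combination (-(1:ℝ)/13456) * hu
    rw [hinv]; ring
  -- bounds on L
  have hL1pos : 0 < L (1/2) := by
    rw [hL1]
    apply Real.log_pos
    nlinarith
  have hL1ub : L (1/2) ≤ 1.1945 := by
    rw [hL1]
    have hexp : ((9:ℝ) + 2*Real.sqrt 14)/5 < Real.exp 1.1945 := by
      have hb := Real.exp_bound (x := 0.1945) (by rw [abs_of_nonneg] <;> norm_num) (n := 4) (by norm_num)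
      rw [abs_of_nonneg (by norm_num : (0:ℝ) ≤ 0.1945)] at hb
      norm_num [Finset.sum_range_succ, Nat.factorial] at hb
      have hb' := abs_le.1 hb
      have he2 : (1.21456:ℝ) ≤ Real.exp 0.1945 := by linarith [hb'.1, hb'.2]
      have he1 : (2.7182818283:ℝ) < Real.exp 1 := Real.exp_one_gt_d9
      have hsplit : Real.exp 1.1945 = Real.exp 1 * Real.exp 0.1945 := by
        rw [← Real.exp_add]; norm_num
      rw [hsplit]
      nlinarith [Real.exp_pos 1, Real.exp_pos (0.1945:ℝ)]
    exact le_of_lt (by rw [← Real.log_lt_iff_lt_exp (by positivity)] at hexp; exact hexp)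
  have hL2lb : (1.2795:ℝ) ≤ L (2/5) := by
    rw [hL2]
    have hexp : Real.exp 1.2795 < ((225:ℝ) + Real.sqrt 37169)/116 := by
      have hb := Real.exp_bound (x := 0.2795) (by rw [abs_of_nonneg] <;> norm_num) (n := 5) (by norm_num)
      rw [abs_of_nonneg (by norm_num : (0:ℝ) ≤ 0.2795)] at hb
      norm_num [Finset.sum_range_succ, Nat.factorial] at hb
      have hb' := abs_le.1 hb
      have he2 : Real.exp 0.2795 ≤ 1.32248 := by linarith [hb'.1, hb'.2]
      have he1 : Real.exp 1 < 2.7182818286 := Real.exp_one_lt_d9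
      have hsplit : Real.exp 1.2795 = Real.exp 1 * Real.exp 0.2795 := by
        rw [← Real.exp_add]; norm_num
      rw [hsplit]
      nlinarith [Real.exp_pos 1, Real.exp_pos (0.2795:ℝ)]
    have := (Real.lt_log_iff_exp_lt (by positivity)).2 hexp
    linarith
  have hL2pos : 0 < L (2/5) := by linarith
  -- θ values and bounds
  have hth1 : θ (1/2) = Real.arccos (11/25) := by unfold θ; norm_num
  have hth2 : θ (2/5) = Real.arccos (1136/4205) := by unfold θ; norm_num
  have hπlb : (3.141592:ℝ) < Real.pi := Real.pi_gt_d6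
  have hπub : Real.pi < 3.141593 := Real.pi_lt_d6
  have hθ1 : (1.112:ℝ) < θ (1/2) := by
    rw [hth1]
    exact lt_arccos (by norm_num) (by norm_num) (by linarith) cos_1112
  have hθ2 : θ (2/5) < 1.303 := by
    rw [hth2]
    exact arccos_lt (by norm_num) (by norm_num) (by norm_num) cos_1303
  have hθ2n : 0 ≤ θ (2/5) := by rw [hth2]; exact Real.arccos_nonneg _
  -- arccos bounds
  have hA1 : Real.arccos (5/9) < 0.9855 :=
    arccos_lt (by norm_num) (by norm_num) (by norm_num) cos_9855
  have hA2 : (1.0255:ℝ) < Real.arccos (116/225) :=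
    lt_arccos (by norm_num) (by norm_num) (by linarith) cos_10255
  have hA2u : Real.arccos (116/225) ≤ Real.pi/2 :=
    Real.arccos_le_pi_div_two.2 (by norm_num)
  -- rewrite β
  have hb1 : β 0 (1/2) = 1 / L (1/2) * Real.arccos (5/9) := by
    unfold β
    rw [zero_mul, Real.cosh_zero, hcosh1]
    norm_num
  have hb2 : β 0 (2/5) = 1 / L (2/5) * Real.arccos (116/225) := by
    unfold β
    rw [zero_mul, Real.cosh_zero, hcosh2]
    norm_num
  rw [hb1, hb2]
  show (Real.pi + θ (1/2)) / (2 * L (1/2)) - (Real.pi + θ (2/5)) / (2 * L (2/5)) > _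
  exact final_ineq hπlb hπub hθ1 hθ2 hθ2n hA1 hA2 hA2u hL1pos hL1ub hL2lb
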